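/- arXiv:2603.03480 — 5 statements merged into one kernel-verified Lean document; each statement's English description precedes it below -/
import Mathlib

section
/- For natural numbers a, b, l, let c(a, b, l) denote the coefficient of x^l in the polynomial (1 - x)^a (1 + x)^b. Then for all natural numbers N, l, l', the sum over a = 0, ..., N of binom(N, a) · c(a, N - a, l) · c(a, N - a, l') equals 2^N · binom(N, l) when l = l', and equals 0 when l ≠ l'. -/
open Polynomial

/-- `c a b l` is the coefficient of `x^l` in `(1 - x)^a * (1 + x)^b`. -/
noncomputable def coeffC (a b l : ℕ) : ℤ :=
  (((1 - X) ^ a * (1 + X) ^ b : Polynomial ℤ)).coeff l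

/-- Orthogonality of the coefficients of `(1-x)^a (1+x)^{N-a}`. -/
theorem orthogonality_of_c (N l l' : ℕ) :
    ∑ a ∈ Finset.range (N + 1),
        (N.choose a : ℤ) * coeffC a (N - a) l * coeffC a (N - a) l' =
      if l = l' then 2 ^ N * (N.choose l : ℤ) else 0 := by
  classical
  have key : ∑ a ∈ Finset.range (N + 1),
      ((C ((N.choose a : ℤ) * ((1 - X) ^ a * (1 + X) ^ (N - a) : Polynomial ℤ)) : Polynomial (Polynomial ℤ)) *
        (((1 - X) ^ a * (1 + X) ^ (N - a) : Polynomial ℤ).map C))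
      = (2 : Polynomial (Polynomial ℤ)) ^ N * (1 + C X * X) ^ N := by
    have h := add_pow (C (1 - X : Polynomial ℤ) * (1 - X))
      (C (1 + X : Polynomial ℤ) * (1 + X)) N
    have huv : C (1 - X : Polynomial ℤ) * (1 - X) + C (1 + X : Polynomial ℤ) * (1 + X)
        = 2 * (1 + C X * X) := by
      simp only [map_sub, map_add, map_one]
      ring
    rw [huv, mul_pow] at h
    rw [h]
    apply Finset.sum_congr rfl
    intro a _
    rw [mul_pow, mul_pow]
    simp only [Polynomial.map_mul, Polynomial.map_pow, Polynomial.map_sub,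
      Polynomial.map_add, Polynomial.map_one, Polynomial.map_X, map_mul, map_pow,
      map_natCast, map_intCast, Int.cast_natCast]
    ring
  have h2 := congrArg (fun q => (Polynomial.coeff q l').coeff l) key
  simp only [Polynomial.finset_sum_coeff, Polynomial.coeff_C_mul, Polynomial.coeff_map,
    Polynomial.coeff_mul_C] at h2
  have hq : ((1 + C X * X : Polynomial (Polynomial ℤ)) ^ N).coeff l'
      = (N.choose l' : Polynomial ℤ) * X ^ l' := by
    rw [show (1 + C X * X : Polynomial (Polynomial ℤ)) = C X * X + 1 by ring, add_pow]
    simp only [one_pow, mul_one, mul_pow, ← map_pow, Polynomial.finset_sum_coeff,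
      Polynomial.coeff_mul_natCast, Polynomial.coeff_C_mul, Polynomial.coeff_X_pow]
    simp only [mul_ite, ite_mul, zero_mul, mul_zero, mul_one, one_mul,
      Finset.sum_ite_eq, Finset.mem_range]
    split
    · ring
    · rw [Nat.choose_eq_zero_of_lt (by omega)]; simp
  have h3 : (((2 : Polynomial (Polynomial ℤ)) ^ N * (1 + C X * X) ^ N).coeff l').coeff l
      = if l = l' then 2 ^ N * (N.choose l : ℤ) else 0 := by
    rw [show ((2 : Polynomial (Polynomial ℤ)) ^ N) = ((2 ^ N : ℕ) : Polynomial (Polynomial ℤ))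
        by push_cast; ring,
      Polynomial.coeff_natCast_mul, hq]
    simp only [Polynomial.coeff_natCast_mul, Polynomial.coeff_X_pow, mul_ite, mul_zero, mul_one]
    split
    · next h => subst h; push_cast; ring
    · rfl
  rw [h3] at h2
  rw [← h2]
  apply Finset.sum_congr rfl
  intro a _
  simp only [coeffC, Int.cast_natCast, Polynomial.coeff_natCast_mul]
end

section
/- For every natural numbers n and k, every p ∈ [0, 1], and all real numbers a and x, there exists τ ∈ [0, 1] such that E_{N ∼ Binomial(n, p)}[ a^N · Σ_{l=k+1}^{N} binom(N, l) x^l ] = binom(n, k+1) · (a p x)^{k+1} · ( a p (1 + τ x) + 1 − p )^{n − k − 1}. -/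
/-!
Exchanging the two sums and using `binom(n, N) binom(N, l) = binom(n, l) binom(n - l, N - l)`
collapses the expectation to the tail `∑_{l > k} binom(n, l) u^l q^(n-l)` of the binomial
expansion of `(q + u)^n`, with `u = a p x` and `q = a p + 1 - p`. This tail is the remainder of
the degree-`k` Taylor polynomial of `t ↦ (q + u t)^n` at `0`, evaluated at `t = 1`, and the
Lagrange form of that remainder is the right-hand side.
-/

open Finset
open scoped Nat

section Binomial

variable {R : Type*} [CommSemiring R]

theorem sum_range_choose_mul_choose_mul_pow (n l : ℕ) (hl : l ≤ n) (y q : R) :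
    ∑ N ∈ range (n + 1), (n.choose N : R) * N.choose l * y ^ N * q ^ (n - N) =
      n.choose l * y ^ l * (y + q) ^ (n - l) := by
  have hlow : ∑ N ∈ range l, (n.choose N : R) * N.choose l * y ^ N * q ^ (n - N) = 0 :=
    sum_eq_zero fun N hN => by simp [Nat.choose_eq_zero_of_lt (mem_range.mp hN)]
  rw [← sum_range_add_sum_Ico _ (by omega : l ≤ n + 1), hlow, zero_add, sum_Ico_eq_sum_range,
    show n + 1 - l = n - l + 1 by omega, add_pow, mul_sum]
  refine sum_congr rfl fun i _ => ?_
  have hchoose : (n.choose (l + i) : R) * (l + i).choose l = n.choose l * (n - l).choose i := by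
    rw [← Nat.cast_mul, ← Nat.cast_mul, Nat.choose_mul (Nat.le_add_right l i),
      Nat.add_sub_cancel_left]
  rw [pow_add, Nat.sub_add_eq]
  calc _ = ((n.choose (l + i) : R) * (l + i).choose l) * (y ^ l * y ^ i * q ^ (n - l - i)) := by
        ring
    _ = _ := by rw [hchoose]; ring

theorem sum_choose_mul_pow_mul_sum_Icc_choose (n k : ℕ) (p q a x : R) :
    ∑ N ∈ range (n + 1), (n.choose N : R) * p ^ N * q ^ (n - N) * a ^ N *
        ∑ l ∈ Icc (k + 1) N, (N.choose l : R) * x ^ l =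
      ∑ l ∈ Icc (k + 1) n, (n.choose l : R) * (a * p * x) ^ l * (a * p + q) ^ (n - l) := by
  have hextend : ∀ N ∈ range (n + 1), ∑ l ∈ Icc (k + 1) N, (N.choose l : R) * x ^ l =
      ∑ l ∈ Icc (k + 1) n, (N.choose l : R) * x ^ l := by
    intro N hN
    refine sum_subset (Icc_subset_Icc_right (Nat.lt_succ_iff.mp (mem_range.mp hN))) ?_
    intro l hl hlN
    simp only [mem_Icc] at hl hlN
    simp [Nat.choose_eq_zero_of_lt (by omega : N < l)]
  rw [sum_congr rfl fun N hN => by rw [hextend N hN, mul_sum], sum_comm]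
  refine sum_congr rfl fun l hl => ?_
  calc _ = x ^ l * ∑ N ∈ range (n + 1),
        (n.choose N : R) * N.choose l * (a * p) ^ N * q ^ (n - N) := by
        rw [mul_sum]; exact sum_congr rfl fun N _ => by ring
    _ = _ := by
        rw [sum_range_choose_mul_choose_mul_pow n l (mem_Icc.mp hl).2]; ring

end Binomial

theorem iteratedDeriv_const_add_mul_pow {𝕜 : Type*} [NontriviallyNormedField 𝕜]
    (q u : 𝕜) (n j : ℕ) (t : 𝕜) :
    iteratedDeriv j (fun t => (q + u * t) ^ n) t =
      n.descFactorial j * u ^ j * (q + u * t) ^ (n - j) := by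
  rw [iteratedDeriv_comp_const_mul (f := fun z => (q + z) ^ n) (by fun_prop) u]
  simp only [iteratedDeriv_comp_const_add j (fun z => z ^ n) q, iteratedDeriv_pow]
  ring

theorem taylorWithinEval_eq_sum_iteratedDeriv {E : Type*} [NormedAddCommGroup E]
    [NormedSpace ℝ E] {f : ℝ → E} {n : ℕ} {s : Set ℝ} {x₀ : ℝ} (hs : UniqueDiffOn ℝ s)
    (hx₀ : x₀ ∈ s) (hf : ContDiffAt ℝ n f x₀) (x : ℝ) :
    taylorWithinEval f n s x₀ x =
      ∑ i ∈ range (n + 1), ((i ! : ℝ)⁻¹ * (x - x₀) ^ i) • iteratedDeriv i f x₀ := by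
  rw [taylor_within_apply]
  refine sum_congr rfl fun i hi => ?_
  have hin : (i : WithTop ℕ∞) ≤ n := by exact_mod_cast Nat.lt_succ_iff.mp (mem_range.mp hi)
  rw [iteratedDerivWithin_eq_iteratedDeriv hs (hf.of_le hin) hx₀]

theorem exists_sum_Icc_choose_mul_pow_eq (n k : ℕ) (hk : k ≤ n) (q u : ℝ) :
    ∃ τ ∈ Set.Ioo (0 : ℝ) 1, ∑ l ∈ Icc (k + 1) n, (n.choose l : ℝ) * u ^ l * q ^ (n - l) =
      n.choose (k + 1) * u ^ (k + 1) * (q + u * τ) ^ (n - k - 1) := by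
  set G : ℝ → ℝ := fun t => (q + u * t) ^ n with hG
  have hGsmooth : ContDiff ℝ (k + 1) G := by fun_prop
  obtain ⟨τ, hτ, hrem⟩ :=
    taylor_mean_remainder_lagrange_iteratedDeriv zero_ne_one hGsmooth.contDiffOn
  rw [Set.uIoo_of_le zero_le_one] at hτ
  refine ⟨τ, hτ, ?_⟩
  have htaylor : taylorWithinEval G k (Set.uIcc 0 1) 0 1 =
      ∑ i ∈ range (k + 1), (n.choose i : ℝ) * u ^ i * q ^ (n - i) := by
    rw [taylorWithinEval_eq_sum_iteratedDeriv (uniqueDiffOn_uIcc zero_ne_one)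
      Set.left_mem_uIcc (hGsmooth.contDiffAt.of_le (by norm_cast; omega))]
    refine sum_congr rfl fun i _ => ?_
    rw [iteratedDeriv_const_add_mul_pow, Nat.descFactorial_eq_factorial_mul_choose, smul_eq_mul]
    push_cast
    field_simp
    ring
  have hG1 : G 1 = ∑ i ∈ range (n + 1), (n.choose i : ℝ) * u ^ i * q ^ (n - i) := by
    simp only [hG, mul_one]
    rw [add_comm, add_pow]
    exact sum_congr rfl fun i _ => by ring
  have htail : ∑ l ∈ Icc (k + 1) n, (n.choose l : ℝ) * u ^ l * q ^ (n - l) =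
      G 1 - taylorWithinEval G k (Set.uIcc 0 1) 0 1 := by
    rw [hG1, htaylor, ← sum_range_add_sum_Ico _ (by omega : k + 1 ≤ n + 1),
      Ico_add_one_right_eq_Icc]
    ring
  rw [htail, hrem, iteratedDeriv_const_add_mul_pow, Nat.descFactorial_eq_factorial_mul_choose,
    Nat.sub_sub]
  push_cast
  field_simp
  ring

theorem binomial_taylor_remainder_general (n k : ℕ) (p : ℝ)
    (a x : ℝ) :
    ∃ τ ∈ Set.Icc (0 : ℝ) 1,
      ∑ N ∈ Finset.range (n + 1),
          (n.choose N : ℝ) * p ^ N * (1 - p) ^ (n - N) * a ^ N *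
            ∑ l ∈ Finset.Icc (k + 1) N, (N.choose l : ℝ) * x ^ l =
        (n.choose (k + 1) : ℝ) * (a * p * x) ^ (k + 1) *
          (a * p * (1 + τ * x) + 1 - p) ^ (n - k - 1) := by
  rw [sum_choose_mul_pow_mul_sum_Icc_choose]
  rcases le_or_gt k n with hk | hk
  · obtain ⟨τ, hτ, htail⟩ := exists_sum_Icc_choose_mul_pow_eq n k hk (a * p + (1 - p)) (a * p * x)
    refine ⟨τ, Set.Ioo_subset_Icc_self hτ, ?_⟩
    rw [htail, show a * p * (1 + τ * x) + 1 - p = a * p + (1 - p) + a * p * x * τ by ring]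
  · refine ⟨0, Set.left_mem_Icc.mpr zero_le_one, ?_⟩
    have hnk : n < k + 1 := Nat.lt_succ_of_lt hk
    simp [Icc_eq_empty_of_lt hnk, Nat.choose_eq_zero_of_lt hnk]

/-- Taylor-remainder identity for the binomial expectation of the truncated binomial sum:
there exists `τ ∈ [0,1]` with
`E_{N∼B(n,p)}[aᴺ Σ_{l=k+1}^N binom(N,l) xˡ]
  = binom(n,k+1) (apx)^{k+1} (ap(1+τx)+1-p)^{n-k-1}`. -/
theorem binomial_taylor_remainder (n k : ℕ) (p : ℝ) (hp : p ∈ Set.Icc (0 : ℝ) 1)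
    (a x : ℝ) :
    ∃ τ ∈ Set.Icc (0 : ℝ) 1,
      ∑ N ∈ Finset.range (n + 1),
          (n.choose N : ℝ) * p ^ N * (1 - p) ^ (n - N) * a ^ N *
            ∑ l ∈ Finset.Icc (k + 1) N, (N.choose l : ℝ) * x ^ l =
        (n.choose (k + 1) : ℝ) * (a * p * x) ^ (k + 1) *
          (a * p * (1 + τ * x) + 1 - p) ^ (n - k - 1) :=
  binomial_taylor_remainder_general n k p a x
end

section
/- For every real number d ≥ 1 and every natural number k satisfying k ≥ 4 log d + 2, one has ( 2 log d / (k + 1) )^{k+1} ≤ 1 / (8 d²). -/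
/-- For `d ≥ 1` and `k ≥ 4 log d + 2`, `(2 log d / (k+1))^{k+1} ≤ 1/(8 d²)`. -/
theorem log_power_bound (d : ℝ) (hd : 1 ≤ d) (k : ℕ)
    (hk : 4 * Real.log d + 2 ≤ (k : ℝ)) :
    (2 * Real.log d / ((k : ℝ) + 1)) ^ (k + 1) ≤ 1 / (8 * d ^ 2) := by
  have hL : 0 ≤ Real.log d := Real.log_nonneg hd
  have hk1 : (0:ℝ) < (k:ℝ) + 1 := by positivity
  have hbase0 : 0 ≤ 2 * Real.log d / ((k:ℝ)+1) := by positivity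
  have hbase : 2 * Real.log d / ((k:ℝ)+1) ≤ 1/2 := by
    rw [div_le_iff₀ hk1]; nlinarith
  have h1 : (2 * Real.log d / ((k:ℝ)+1)) ^ (k+1) ≤ (1/2:ℝ)^(k+1) :=
    pow_le_pow_left₀ hbase0 hbase _
  refine h1.trans ?_
  have hd0 : (0:ℝ) < d := lt_of_lt_of_le one_pos hd
  have h2 : 8 * d^2 ≤ 2^(k+1) := by
    have hlog : Real.log (8 * d^2) ≤ Real.log ((2:ℝ)^(k+1)) := by
      rw [Real.log_mul (by norm_num) (by positivity), Real.log_pow, Real.log_pow]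
      have h8 : Real.log 8 = 3 * Real.log 2 := by
        rw [show (8:ℝ) = 2^3 by norm_num, Real.log_pow]; push_cast; ring
      have hl2 : (0.6931471803:ℝ) < Real.log 2 := Real.log_two_gt_d9
      rw [h8]; push_cast; nlinarith
    calc 8*d^2 = Real.exp (Real.log (8*d^2)) := (Real.exp_log (by positivity)).symm
      _ ≤ Real.exp (Real.log ((2:ℝ)^(k+1))) := Real.exp_le_exp.2 hlog
      _ = 2^(k+1) := Real.exp_log (by positivity)
  rw [one_div_pow]
  exact one_div_le_one_div_of_le (by positivity) h2
end

section
/- Let S be a finite set, p a probability distribution on S, c ≥ 0 a real number, V : S → [0, c] a function, and w ∈ [0, c] a real number. Then 𝕍(p, V) ≤ pV² − w² + 2c · max{ w − pV, 0 }, where pV² := Σ_s p(s) V(s)². -/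
/-- Variance decomposition: for a probability distribution `p` on a finite set,
a function `V` with values in `[0, c]`, and any `w ∈ [0, c]`,
`𝕍(p, V) ≤ pV² − w² + 2c·max{w − pV, 0}`. -/
theorem variance_decomposition {S : Type*} [Fintype S]
    (p : S → ℝ) (hp0 : ∀ s, 0 ≤ p s) (hp1 : ∑ s, p s = 1)
    (c : ℝ) (hc : 0 ≤ c) (V : S → ℝ) (hV : ∀ s, V s ∈ Set.Icc 0 c)
    (w : ℝ) (hw : w ∈ Set.Icc 0 c) :
    ∑ s, p s * (V s - ∑ s', p s' * V s') ^ 2 ≤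
      (∑ s, p s * V s ^ 2) - w ^ 2 + 2 * c * max (w - ∑ s, p s * V s) 0 := by
  set m := ∑ s, p s * V s with hm
  have hvar : ∑ s, p s * (V s - m) ^ 2 = (∑ s, p s * V s ^ 2) - m ^ 2 := by
    have : ∀ s, p s * (V s - m) ^ 2 =
        p s * V s ^ 2 - 2 * m * (p s * V s) + m ^ 2 * p s := by
      intro s; ring
    rw [Finset.sum_congr rfl fun s _ => this s, Finset.sum_add_distrib,
      Finset.sum_sub_distrib, ← Finset.mul_sum, ← Finset.mul_sum, hp1]
    ring
  have hm0 : 0 ≤ m := Finset.sum_nonneg fun s _ =>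
    mul_nonneg (hp0 s) (hV s).1
  have hmc : m ≤ c := by
    calc m ≤ ∑ s, p s * c := Finset.sum_le_sum fun s _ =>
          mul_le_mul_of_nonneg_left (hV s).2 (hp0 s)
    _ = c := by rw [← Finset.sum_mul, hp1, one_mul]
  rw [hvar]
  have key : w ^ 2 - m ^ 2 ≤ 2 * c * max (w - m) 0 := by
    rcases le_or_gt w m with h | h
    · have : w ^ 2 ≤ m ^ 2 := pow_le_pow_left₀ hw.1 h 2
      have h2 : 0 ≤ 2 * c * max (w - m) 0 :=
        mul_nonneg (by positivity) (le_max_right _ _)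
      linarith
    · rw [max_eq_left (by linarith)]
      nlinarith [hw.2]
  linarith
end

section
/- Let X be a finite set, let P and P̂ be probability distributions on X, let B := |{x : P(x) > 0}| be the support size of P, and suppose the support of P̂ is contained in the support of P. Let c > 0 and assume that |P(x) − P̂(x)| ≤ sqrt(2 P(x) c) + c/3 holds for every x in the support of P. Then for all real numbers a ≤ b and every function V : X → [a, b], one has | Σ_x (P(x) − P̂(x)) V(x) | ≤ sqrt( 2 𝕍(P, V) B c ) + (b − a) B c / 3. -/
/-- If `P` and `P̂` are probability distributions on a finite set `X` with
`supp P̂ ⊆ supp P`, `B` is the support size of `P`, and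
`|P(x) − P̂(x)| ≤ sqrt(2 P(x) c) + c/3` on the support of `P`, then for every function
`V : X → [a, b]`, `|Σ_x (P(x) − P̂(x)) V(x)| ≤ sqrt(2 𝕍(P,V) B c) + (b−a) B c/3`. -/
theorem concentration_all_functions {X : Type*} [Fintype X]
    (P Phat : X → ℝ)
    (hP0 : ∀ x, 0 ≤ P x) (hP1 : ∑ x, P x = 1)
    (hQ0 : ∀ x, 0 ≤ Phat x) (hQ1 : ∑ x, Phat x = 1)
    (hsupp : ∀ x, 0 < Phat x → 0 < P x)
    (c : ℝ) (hc : 0 < c)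
    (hclose : ∀ x, 0 < P x → |P x - Phat x| ≤ Real.sqrt (2 * P x * c) + c / 3)
    (a b : ℝ) (hab : a ≤ b) (V : X → ℝ) (hV : ∀ x, V x ∈ Set.Icc a b) :
    |∑ x, (P x - Phat x) * V x| ≤
      Real.sqrt (2 * (∑ x, P x * (V x - ∑ y, P y * V y) ^ 2) *
          (Nat.card {x : X // 0 < P x}) * c) +
        (b - a) * (Nat.card {x : X // 0 < P x}) * c / 3 := by
  classical
  set μ := ∑ y, P y * V y with hμ
  set Var := ∑ x, P x * (V x - μ) ^ 2 with hVar
  set S := Finset.univ.filter (fun x => 0 < P x) with hSdef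
  have hBcard : (Nat.card {x : X // 0 < P x} : ℝ) = (S.card : ℝ) := by
    rw [Nat.card_eq_fintype_card, Fintype.card_subtype]
  have hnotS : ∀ x, x ∉ S → P x = 0 ∧ Phat x = 0 := by
    intro x hx
    simp only [hSdef, Finset.mem_filter, Finset.mem_univ, true_and, not_lt] at hx
    have hPx : P x = 0 := le_antisymm hx (hP0 x)
    refine ⟨hPx, ?_⟩
    by_contra h
    have : 0 < Phat x := lt_of_le_of_ne (hQ0 x) (Ne.symm h)
    exact absurd (hsupp x this) (by rw [hPx]; exact lt_irrefl 0)
  -- rewrite the sum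
  have key : ∑ x, (P x - Phat x) * V x = ∑ x ∈ S, (P x - Phat x) * (V x - μ) := by
    have h1 : ∑ x, (P x - Phat x) * (V x - μ)
        = ∑ x, (P x - Phat x) * V x - μ * ∑ x, (P x - Phat x) := by
      rw [Finset.mul_sum, ← Finset.sum_sub_distrib]
      congr 1; funext x; ring
    have h2 : ∑ x, (P x - Phat x) = 0 := by
      rw [Finset.sum_sub_distrib, hP1, hQ1]; ring
    have h3 : ∑ x, (P x - Phat x) * (V x - μ) = ∑ x ∈ S, (P x - Phat x) * (V x - μ) := by
      refine (Finset.sum_subset (Finset.subset_univ S) ?_).symm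
      intro x _ hx
      obtain ⟨h4, h5⟩ := hnotS x hx
      rw [h4, h5]; ring
    rw [← h3, h1, h2]; ring
  have hμa : a ≤ μ := by
    calc a = ∑ y, P y * a := by rw [← Finset.sum_mul, hP1, one_mul]
    _ ≤ μ := Finset.sum_le_sum fun y _ => mul_le_mul_of_nonneg_left (hV y).1 (hP0 y)
  have hμb : μ ≤ b := by
    calc μ ≤ ∑ y, P y * b :=
      Finset.sum_le_sum fun y _ => mul_le_mul_of_nonneg_left (hV y).2 (hP0 y)
    _ = b := by rw [← Finset.sum_mul, hP1, one_mul]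
  have hVμ : ∀ x, |V x - μ| ≤ b - a := by
    intro x
    rw [abs_le]
    constructor
    · linarith [(hV x).1]
    · linarith [(hV x).2]
  -- variance over S
  have hVarS : ∑ x ∈ S, P x * (V x - μ) ^ 2 = Var := by
    refine Finset.sum_subset (Finset.subset_univ S) ?_
    intro x _ hx
    rw [(hnotS x hx).1]; ring
  have hVarnn : 0 ≤ Var := Finset.sum_nonneg fun x _ =>
    mul_nonneg (hP0 x) (sq_nonneg _)
  -- Cauchy-Schwarz
  have hCS : ∑ x ∈ S, Real.sqrt (P x) * |V x - μ| ≤ Real.sqrt (Var * S.card) := by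
    have h := Finset.sum_mul_sq_le_sq_mul_sq S
      (fun x => Real.sqrt (P x) * |V x - μ|) (fun x => (1 : ℝ))
    simp only [mul_one, one_pow] at h
    have heq : ∑ x ∈ S, (Real.sqrt (P x) * |V x - μ|) ^ 2 = Var := by
      rw [← hVarS]
      refine Finset.sum_congr rfl fun x _ => ?_
      rw [mul_pow, Real.sq_sqrt (hP0 x), sq_abs]
    rw [heq, Finset.sum_const, nsmul_eq_mul, mul_one] at h
    have hnn : 0 ≤ ∑ x ∈ S, Real.sqrt (P x) * |V x - μ| :=
      Finset.sum_nonneg fun x _ => mul_nonneg (Real.sqrt_nonneg _) (abs_nonneg _)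
    calc ∑ x ∈ S, Real.sqrt (P x) * |V x - μ|
        = Real.sqrt ((∑ x ∈ S, Real.sqrt (P x) * |V x - μ|) ^ 2) :=
          (Real.sqrt_sq hnn).symm
      _ ≤ Real.sqrt (Var * S.card) := Real.sqrt_le_sqrt h
  -- main estimate
  rw [key, hBcard]
  calc |∑ x ∈ S, (P x - Phat x) * (V x - μ)|
      ≤ ∑ x ∈ S, |(P x - Phat x) * (V x - μ)| := Finset.abs_sum_le_sum_abs _ _
    _ = ∑ x ∈ S, |P x - Phat x| * |V x - μ| := by
        refine Finset.sum_congr rfl fun x _ => abs_mul _ _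
    _ ≤ ∑ x ∈ S, (Real.sqrt (2 * P x * c) + c / 3) * |V x - μ| := by
        refine Finset.sum_le_sum fun x hx => ?_
        have hPx : 0 < P x := (Finset.mem_filter.mp hx).2
        exact mul_le_mul_of_nonneg_right (hclose x hPx) (abs_nonneg _)
    _ = ∑ x ∈ S, Real.sqrt (2 * P x * c) * |V x - μ|
        + ∑ x ∈ S, (c / 3) * |V x - μ| := by
        rw [← Finset.sum_add_distrib]
        refine Finset.sum_congr rfl fun x _ => ?_; ring
    _ ≤ Real.sqrt (2 * c) * ∑ x ∈ S, Real.sqrt (P x) * |V x - μ|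
        + (c / 3) * ((b - a) * S.card) := by
        gcongr
        · rw [Finset.mul_sum]
          refine Finset.sum_le_sum fun x _ => ?_
          have : Real.sqrt (2 * P x * c) = Real.sqrt (2 * c) * Real.sqrt (P x) := by
            rw [← Real.sqrt_mul (by positivity)]
            ring_nf
          rw [this, mul_assoc]
        · calc ∑ x ∈ S, (c / 3) * |V x - μ|
              ≤ ∑ x ∈ S, (c / 3) * (b - a) := by
                refine Finset.sum_le_sum fun x _ => ?_
                exact mul_le_mul_of_nonneg_left (hVμ x) (by positivity)
            _ = (c / 3) * ((b - a) * S.card) := by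
                rw [Finset.sum_const, nsmul_eq_mul]; ring
    _ ≤ Real.sqrt (2 * c) * Real.sqrt (Var * S.card)
        + (c / 3) * ((b - a) * S.card) := by
        gcongr
    _ = Real.sqrt (2 * Var * S.card * c) + (b - a) * S.card * c / 3 := by
        rw [← Real.sqrt_mul (by positivity)]
        ring_nf
end
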